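/- Let H be a cancellative commutative monoid with zero (1 ≠ 0) with quotient groupoid G. Then the set 𝒳 of all generalized H-module systems on G, endowed with the Zariski topology, is a spectral space. -/

import Mathlib

open Set Topology

/-- A topological space is spectral if it is quasi-compact, `T0`, sober (every nonempty
irreducible closed subset has a unique generic point), and its quasi-compact open subsets
form a basis of the topology that is closed under finite intersections. -/
def IsSpectralSpace (X : Type*) [TopologicalSpace X] : Prop :=
  CompactSpace X ∧ T0Space X ∧ QuasiSober X ∧
    TopologicalSpace.IsTopologicalBasis {U : Set X | IsOpen U ∧ IsCompact U} ∧
    ∀ U V : Set X, IsOpen U → IsCompact U → IsOpen V → IsCompact V → IsCompact (U ∩ V)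

variable (G : Type*) [CommGroupWithZero G]

/-- `G` is the quotient groupoid of `H`: every element of `G` has the form `a * b⁻¹`
with `a, b ∈ H`, `b ≠ 0`. -/
def IsQuotientGroupoid (H : Submonoid G) : Prop :=
  ∀ g : G, ∃ a ∈ H, ∃ b ∈ H, b ≠ 0 ∧ g = a * b⁻¹

/-- A generalized `H`-module system on `G`. -/
structure ModuleSystem (H : Submonoid G) where
  toFun : Set G → Set G
  id1 : ∀ A : Set G, A ∪ {0} ⊆ toFun A
  m2 : ∀ A B : Set G, A ⊆ B → toFun A ⊆ toFun B
  id3 : ∀ (c : G) (A : Set G), (fun x => c * x) '' toFun A = toFun ((fun x => c * x) '' A)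
  m4 : ∀ A : Set G, Set.image2 (· * ·) (H : Set G) (toFun A) = toFun A

/-- The Zariski topology on the set `𝒳` of all generalized `H`-module systems on `G`,
generated by the sets `U_{A,x} = {r | x ∈ A_r}`. -/
instance (H : Submonoid G) : TopologicalSpace (ModuleSystem G H) :=
  TopologicalSpace.generateFrom
    {U : Set (ModuleSystem G H) | ∃ (A : Set G) (x : G), U = {r | x ∈ r.toFun A}}

/-!
A module system is determined by the subbasic sets `{r | x ∈ A_r}` containing it, and every
upward closed family `P` of sets of module systems with `univ ∈ P`, `∅ ∉ P` defines one pointwise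
by `x ∈ A_L ↔ {r | x ∈ A_r} ∈ P`: each axiom is a pointwise condition, and for `c ≠ 0`
multiplication by `c` is a bijection. For an ultrafilter `P` this `L` is a limit of `P`, so all
intersections of subbasic opens are quasi-compact, and they form a basis stable under
intersection. For `P = {U | (C ∩ U).Nonempty}` with `C` irreducible closed, `L` is a generic
point of `C`.
-/

open TopologicalSpace

section Subbasis

variable {X : Type*} [t : TopologicalSpace X] {S : Set (Set X)}

theorem isCompact_sInter_of_subbasis (hS : t = generateFrom S)
    (hlim : ∀ F : Ultrafilter X, ∃ a, ∀ s ∈ S, a ∈ s ↔ s ∈ F) {T : Set (Set X)} (hT : T ⊆ S) :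
    IsCompact (⋂₀ T) := by
  refine isCompact_iff_ultrafilter_le_nhds.2 fun F hF => ?_
  obtain ⟨a, ha⟩ := hlim F
  have hTF : ∀ s ∈ T, s ∈ F := fun s hs =>
    F.mem_of_superset (Filter.le_principal_iff.1 hF) (sInter_subset_of_mem hs)
  refine ⟨a, mem_sInter.2 fun s hs => (ha s (hT hs)).2 (hTF s hs), ?_⟩
  rw [hS, nhds_generateFrom]
  exact le_iInf₂ fun s hs => Filter.le_principal_iff.2 ((ha s hs.2).1 hs.1)

theorem isGenericPoint_of_subbasis (hS : t = generateFrom S) {C : Set X}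
    (hC : IsIrreducible C) (hCc : IsClosed C) {a : X}
    (ha : ∀ s ∈ S, a ∈ s ↔ (C ∩ s).Nonempty) : IsGenericPoint a C := by
  have hB := isTopologicalBasis_of_subbasis hS
  have key : ∀ o ∈ (fun f => ⋂₀ f) '' {f : Set (Set X) | f.Finite ∧ f ⊆ S},
      a ∈ o ↔ (C ∩ o).Nonempty := by
    rintro _ ⟨f, ⟨hf, hfS⟩, rfl⟩
    refine ⟨fun hao => ?_, fun ⟨x, hxC, hx⟩ => ?_⟩
    · lift f to Finset (Set X) using hf
      exact isIrreducible_iff_sInter.1 hC f (fun u hu => hS ▸ isOpen_generateFrom_of_mem (hfS hu))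
        fun u hu => (ha u (hfS hu)).1 (hao u hu)
    · exact mem_sInter.2 fun u hu => (ha u (hfS hu)).2 ⟨x, hxC, hx u hu⟩
  have haC : a ∈ C := hCc.closure_eq ▸ hB.mem_closure_iff.2 fun o ho hao =>
    inter_comm C o ▸ (key o ho).1 hao
  exact (closure_minimal (singleton_subset_iff.2 haC) hCc).antisymm fun x hx =>
    hB.mem_closure_iff.2 fun o ho hxo => ⟨a, (key o ho).2 ⟨x, hx, hxo⟩, rfl⟩

theorem spectralSpace_of_subbasis [T0Space X] (hS : t = generateFrom S)
    (hlim : ∀ F : Ultrafilter X, ∃ a, ∀ s ∈ S, a ∈ s ↔ s ∈ F)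
    (hgen : ∀ C : Set X, IsIrreducible C → IsClosed C → ∃ a, ∀ s ∈ S, a ∈ s ↔ (C ∩ s).Nonempty) :
    SpectralSpace X := by
  have hB := isTopologicalBasis_of_subbasis hS
  rw [image_eq_range] at hB
  have hcompact : ∀ f : {f : Set (Set X) // f ∈ {f | f.Finite ∧ f ⊆ S}}, IsCompact (⋂₀ f.1) :=
    fun f => isCompact_sInter_of_subbasis hS hlim f.2.2
  exact
    { isCompact_univ := sInter_empty (α := X) ▸ isCompact_sInter_of_subbasis hS hlim (empty_subset S)
      sober := fun hC hCc => let ⟨a, ha⟩ := hgen _ hC hCc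
        ⟨a, isGenericPoint_of_subbasis hS hC hCc ha⟩
      inter_isCompact := (QuasiSeparatedSpace.of_isTopologicalBasis hB fun f g =>
        sInter_union f.1 g.1 ▸ isCompact_sInter_of_subbasis hS hlim
          (union_subset f.2.2 g.2.2)).inter_isCompact
      isTopologicalBasis := (PrespectralSpace.of_isTopologicalBasis' hB hcompact).isTopologicalBasis }

theorem SpectralSpace.isSpectralSpace [SpectralSpace X] : IsSpectralSpace X :=
  ⟨inferInstance, inferInstance, inferInstance, PrespectralSpace.isTopologicalBasis,
    QuasiSeparatedSpace.inter_isCompact⟩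

end Subbasis

namespace ModuleSystem

variable {G} {H : Submonoid G}

theorem toFun_injective : Function.Injective (toFun : ModuleSystem G H → Set G → Set G) := by
  rintro ⟨⟩ ⟨⟩ rfl
  rfl

theorem zero_mem (r : ModuleSystem G H) (A : Set G) : (0 : G) ∈ r.toFun A :=
  r.id1 A (mem_union_right A rfl)

theorem mul_mem (r : ModuleSystem G H) {A : Set G} {h x : G} (hh : h ∈ H)
    (hx : x ∈ r.toFun A) : h * x ∈ r.toFun A :=
  r.m4 A ▸ mem_image2_of_mem hh hx

theorem mul_mem_toFun_image_iff (r : ModuleSystem G H) (A : Set G) {c : G} (hc : c ≠ 0) (x : G) :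
    c * x ∈ r.toFun ((c * ·) '' A) ↔ x ∈ r.toFun A := by
  rw [← r.id3]
  exact (mul_right_injective₀ hc).mem_set_image

theorem zero_mul_image_of_zero_mem {T : Set G} (hT : (0 : G) ∈ T) : ((0 : G) * ·) '' T = {0} := by
  simp only [zero_mul]
  exact Nonempty.image_const ⟨0, hT⟩ 0

theorem toFun_zero_mul_image (r : ModuleSystem G H) (A : Set G) :
    r.toFun (((0 : G) * ·) '' A) = {0} := by
  rw [← r.id3, zero_mul_image_of_zero_mem (r.zero_mem A)]

def ofMonotone (P : Set (ModuleSystem G H) → Prop) (hP : Monotone P) (huniv : P univ)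
    (hempty : ¬ P ∅) : ModuleSystem G H where
  toFun A := {x | P {r | x ∈ r.toFun A}}
  id1 A _ hx := hP (fun r _ => r.id1 A hx) huniv
  m2 A B hAB x hx := hP (fun r hr => r.m2 A B hAB hr) hx
  id3 c A := by
    by_cases hc : c = 0
    · subst hc
      rw [zero_mul_image_of_zero_mem]
      · ext x
        simp only [mem_ofPred_eq, toFun_zero_mul_image, mem_singleton_iff]
        by_cases hx : x = 0 <;> simp [hx, huniv, hempty]
      · exact hP (fun r _ => r.zero_mem A) huniv
    · have hset : ∀ x, {r : ModuleSystem G H | c * x ∈ r.toFun ((c * ·) '' A)} =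
          {r | x ∈ r.toFun A} := fun x => ext fun r => r.mul_mem_toFun_image_iff A hc x
      ext y
      refine ⟨?_, fun hy => ⟨c⁻¹ * y, ?_, mul_inv_cancel_left₀ hc y⟩⟩
      · rintro ⟨x, hx, rfl⟩
        simpa only [mem_ofPred_eq, hset] using hx
      · simpa only [mem_ofPred_eq, ← hset, mul_inv_cancel_left₀ hc] using hy
  m4 A := Subset.antisymm
    (by rintro _ ⟨h, hh, x, hx, rfl⟩; exact hP (fun r hr => r.mul_mem hh hr) hx)
    fun x hx => ⟨1, H.one_mem, x, hx, one_mul x⟩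

instance : T0Space (ModuleSystem G H) :=
  t0Space_iff_inseparable _ |>.2 fun _ _ h => toFun_injective <| funext fun A => ext fun x =>
    h.mem_open_iff (isOpen_generateFrom_of_mem ⟨A, x, rfl⟩)

instance : SpectralSpace (ModuleSystem G H) := by
  refine spectralSpace_of_subbasis rfl (fun F => ?_) (fun C hC _ => ?_)
  · refine ⟨ofMonotone (· ∈ F) (fun _ _ h hU => F.mem_of_superset hU h) Filter.univ_mem
      F.empty_notMem, ?_⟩
    rintro _ ⟨A, x, rfl⟩
    exact Iff.rfl
  · refine ⟨ofMonotone (fun U => (C ∩ U).Nonempty)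
      (fun _ _ h hU => hU.mono (inter_subset_inter_right C h)) (by simpa using hC.nonempty)
      (by simp), ?_⟩
    rintro _ ⟨A, x, rfl⟩
    exact Iff.rfl

end ModuleSystem

theorem moduleSystems_is_spectral (H : Submonoid G) :
    IsSpectralSpace (ModuleSystem G H) :=
  SpectralSpace.isSpectralSpace
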